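/- For all k ≥ r ≥ 2, the Lagrangian density of the family 𝒦_{k+1}^{(r)} satisfies π_λ(𝒦_{k+1}^{(r)}) ≤ (k)_r/k^r; that is, every 𝒦_{k+1}^{(r)}-free r-graph H satisfies λ^(1)(H) ≤ (k)_r/k^r. -/

import Mathlib

open Finset

/-- The `p`-spectral radius of the `r`-uniform hypergraph on vertex set `Fin n`
with edge set `E`: the maximum of `r! * ∑_{e ∈ E} ∏_{v ∈ e} x v` over all
vectors `x` with `‖x‖_p = 1` (equivalently `∑ |x i| ^ p = 1`). -/
noncomputable def specRad (r n : ℕ) (E : Finset (Finset (Fin n))) (p : ℝ) : ℝ :=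
  sSup { y : ℝ | ∃ x : Fin n → ℝ, (∑ i : Fin n, |x i| ^ p) = 1 ∧
    y = (Nat.factorial r : ℝ) * ∑ e ∈ E, ∏ v ∈ e, x v }

/-- The edge set of the Turán `r`-graph `T_r(n,k)`: the complete `k`-partite
`r`-graph on `Fin n` whose parts (the residue classes modulo `k`) are as equal
as possible; its edges are all `r`-sets meeting each part in at most one vertex. -/
def turanEdges (r n k : ℕ) : Finset (Finset (Fin n)) :=
  Finset.univ.filter fun e : Finset (Fin n) =>
    e.card = r ∧ ∀ u ∈ e, ∀ v ∈ e, u ≠ v → (u : ℕ) % k ≠ (v : ℕ) % k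

/-- The `r`-graph on `Fin n` with edge set `E` is isomorphic to `T_r(n,k)`. -/
def IsoToTuran (r n k : ℕ) (E : Finset (Finset (Fin n))) : Prop :=
  ∃ σ : Equiv.Perm (Fin n),
    ∀ e : Finset (Fin n), e ∈ E ↔ e.image (fun v => σ v) ∈ turanEdges r n k

/-- The `r`-graph on `Fin n` with edge set `E` can be transformed into (a copy of)
`T_r(n,k)` by adding and deleting at most `m` edges. -/
def CloseToTuran (r n k : ℕ) (E : Finset (Finset (Fin n))) (m : ℝ) : Prop :=
  ∃ σ : Equiv.Perm (Fin n),
    ((symmDiff E ((turanEdges r n k).image fun e => e.image fun v => σ v)).card : ℝ) ≤ m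

/-- `E` contains a copy of the expanded clique `H_{k+1}^{(r)}`, the `r`-graph obtained
from `K_{k+1}` by enlarging each edge with a new set of `r - 2` vertices, the enlarging
sets being pairwise disjoint and disjoint from the core. Here `c` lists the `k+1` core
vertices and `g i j` (for `i < j`) is the edge containing the core pair `{c i, c j}`. -/
def ContainsExpandedClique (r k : ℕ) {n : ℕ} (E : Finset (Finset (Fin n))) : Prop :=
  ∃ (c : Fin (k + 1) ↪ Fin n) (g : Fin (k + 1) → Fin (k + 1) → Finset (Fin n)),
    (∀ i j : Fin (k + 1), i < j →
      g i j ∈ E ∧ (g i j).card = r ∧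
      g i j ∩ Finset.univ.image (fun i => c i) = {c i, c j}) ∧
    (∀ i j i' j' : Fin (k + 1), i < j → i' < j' → (i, j) ≠ (i', j') →
      g i j ∩ g i' j' ⊆ Finset.univ.image (fun i => c i))

/-- `E` contains a copy of the generalized fan `F_{k+1}^{(r)}`, whose edges are `[r]`
together with `E_{ij} ∪ {i,j}` over all pairs `{i,j} ∈ C([k+1],2) \ C([r],2)`, where the
`E_{ij}` are pairwise disjoint `(r-2)`-sets disjoint from the core `[k+1]`. -/
def ContainsGenFan (r k : ℕ) {n : ℕ} (E : Finset (Finset (Fin n))) : Prop :=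
  ∃ (c : Fin (k + 1) ↪ Fin n) (g : Fin (k + 1) → Fin (k + 1) → Finset (Fin n)),
    ((Finset.univ.filter fun i : Fin (k + 1) => (i : ℕ) < r).image (fun i => c i) ∈ E) ∧
    (∀ i j : Fin (k + 1), i < j → ¬((i : ℕ) < r ∧ (j : ℕ) < r) →
      g i j ∈ E ∧ (g i j).card = r ∧
      g i j ∩ Finset.univ.image (fun i => c i) = {c i, c j}) ∧
    (∀ i j i' j' : Fin (k + 1), i < j → i' < j' → (i, j) ≠ (i', j') →
      ¬((i : ℕ) < r ∧ (j : ℕ) < r) → ¬((i' : ℕ) < r ∧ (j' : ℕ) < r) →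
      g i j ∩ g i' j' ⊆ Finset.univ.image (fun i => c i))

/-- `E` contains a member of the family `𝒦_t^{(r)}` as a subgraph; equivalently,
there is a `t`-set `C` of vertices (the core) every pair of which is covered by an
edge of `E`. -/
def ContainsKFam (t : ℕ) {n : ℕ} (E : Finset (Finset (Fin n))) : Prop :=
  ∃ C : Finset (Fin n), C.card = t ∧
    ∀ u ∈ C, ∀ v ∈ C, u ≠ v → ∃ e ∈ E, u ∈ e ∧ v ∈ e

/-- `E` contains a member of the family `ℱ_t^{(r)}` as a subgraph; equivalently,
there is a `t`-set `C` of vertices (the core) such that some edge of `E` lies entirely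
inside `C` and every pair of vertices of `C` is covered by an edge of `E`. -/
def ContainsFFam (t : ℕ) {n : ℕ} (E : Finset (Finset (Fin n))) : Prop :=
  ∃ C : Finset (Fin n), C.card = t ∧ (∃ e ∈ E, e ⊆ C) ∧
    ∀ u ∈ C, ∀ v ∈ C, u ≠ v → ∃ e ∈ E, u ∈ e ∧ v ∈ e

/-- `E` contains a Berge-`K_t`: distinct core vertices `c 0, …, c (t-1)` and
pairwise distinct edges `φ i j` (for `i < j`) with `{c i, c j} ⊆ φ i j`. -/
def ContainsBergeClique (t : ℕ) {n : ℕ} (E : Finset (Finset (Fin n))) : Prop :=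
  ∃ (c : Fin t ↪ Fin n) (φ : Fin t → Fin t → Finset (Fin n)),
    (∀ i j : Fin t, i < j → φ i j ∈ E ∧ c i ∈ φ i j ∧ c j ∈ φ i j) ∧
    (∀ i j i' j' : Fin t, i < j → i' < j' → (i, j) ≠ (i', j') → φ i j ≠ φ i' j')

/-- `E` (on `Fin n`) contains a copy of the hypergraph `F` (with vertices in `ℕ`). -/
def ContainsCopy {n : ℕ} (E : Finset (Finset (Fin n))) (F : Finset (Finset ℕ)) : Prop :=
  ∃ f : ℕ → Fin n, Set.InjOn f ↑(F.biUnion id) ∧ ∀ e ∈ F, e.image f ∈ E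

/-- `E` is `𝓕`-free for the family `𝓕` of hypergraphs. -/
def FamFree {n : ℕ} (E : Finset (Finset (Fin n))) (𝓕 : Set (Finset (Finset ℕ))) : Prop :=
  ∀ F ∈ 𝓕, ¬ ContainsCopy E F

/-- The Lagrangian density `π_λ(𝓕)`: the supremum of `λ^(1)(H)` over all
`𝓕`-free `r`-graphs `H`. -/
noncomputable def lagrangianDensity (r : ℕ) (𝓕 : Set (Finset (Finset ℕ))) : ℝ :=
  sSup { y : ℝ | ∃ (m : ℕ) (E : Finset (Finset (Fin m))),
    (∀ e ∈ E, e.card = r) ∧ FamFree E 𝓕 ∧ y = specRad r m E 1 }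

/-- The family `𝓕` of `r`-graphs is (edge-)stable with respect to `T_r(n,k)`. -/
def StableFamily (r k : ℕ) (𝓕 : Set (Finset (Finset ℕ))) : Prop :=
  ∀ ε : ℝ, 0 < ε → ∃ δ : ℝ, 0 < δ ∧ ∃ n₀ : ℕ, ∀ n : ℕ, n₀ ≤ n →
    ∀ E : Finset (Finset (Fin n)), (∀ e ∈ E, e.card = r) → FamFree E 𝓕 →
    (1 - δ) * ((Nat.descFactorial k r : ℝ) / (k : ℝ) ^ r) * (n.choose r : ℝ) ≤ (E.card : ℝ) →
    CloseToTuran r n k E (ε * (n.choose r : ℝ))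

/-- The family `𝓕` of `r`-graphs is spectrally stable with respect to `T_r(n,k)`,
for the given `p`. -/
def SpectrallyStableFamily (p : ℝ) (r k : ℕ) (𝓕 : Set (Finset (Finset ℕ))) : Prop :=
  ∀ ε : ℝ, 0 < ε → ∃ δ : ℝ, 0 < δ ∧ ∃ n₀ : ℕ, ∀ n : ℕ, n₀ ≤ n →
    ∀ E : Finset (Finset (Fin n)), (∀ e ∈ E, e.card = r) → FamFree E 𝓕 →
    (1 - δ) * ((Nat.descFactorial k r : ℝ) / (k : ℝ) ^ r) * (n : ℝ) ^ ((r : ℝ) * (1 - 1 / p))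
      < specRad r n E p →
    CloseToTuran r n k E (ε * (n.choose r : ℝ))

/-- The codegree of `u` and `v`: the number of edges containing both. -/
def codeg {n : ℕ} (E : Finset (Finset (Fin n))) (u v : Fin n) : ℕ :=
  (E.filter fun e => u ∈ e ∧ v ∈ e).card

/-- For a partition of `Fin n` into `k` parts given by `P : Fin n → Fin k`,
`partWeight E P = ∑_{e ∈ E} #{i : e ∩ V_i ≠ ∅}`. -/
def partWeight {n k : ℕ} (E : Finset (Finset (Fin n))) (P : Fin n → Fin k) : ℕ :=
  ∑ e ∈ E, (e.image P).card

/-!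
Restricted to the simplex, the Lagrangian polynomial `∑_{e ∈ E} ∏_{v ∈ e} y v` is affine along
the segment that moves weight between two vertices not covered by a common edge, so one endpoint
of that segment, where one of the two vertices has weight zero, is at least as good. Repeating
this, the support shrinks until all its pairs are covered, i.e. (by `𝒦_{k+1}`-freeness) until it
has at most `k` vertices. On a support of size `m ≤ k`, Maclaurin's inequality bounds
`r!` times the Lagrangian polynomial by `r! * C(m, r) / m ^ r = (m)_r / m ^ r ≤ (k)_r / k ^ r`.
-/

theorem pow_mul_add_succ_mul_sub_le_pow_succ {a b : ℝ} (ha : 0 ≤ a) (hb : 0 ≤ b) (n : ℕ) :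
    a ^ n * (a + (n + 1) * (b - a)) ≤ b ^ (n + 1) := by
  induction n with
  | zero => simp
  | succ n ih =>
    have hgap : 0 ≤ (n + 1) * a ^ n * (b - a) ^ 2 := by positivity
    calc a ^ (n + 1) * (a + (↑(n + 1) + 1) * (b - a))
        = b * (a ^ n * (a + (n + 1) * (b - a))) - (n + 1) * a ^ n * (b - a) ^ 2 := by
          push_cast; ring
      _ ≤ b * b ^ (n + 1) := by linarith [mul_le_mul_of_nonneg_left ih hb]
      _ = b ^ (n + 1 + 1) := by ring

theorem descFactorial_div_pow_le_of_le {s k : ℕ} (hs : 0 < s) (hsk : s ≤ k) (r : ℕ) :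
    (s.descFactorial r : ℝ) / (s : ℝ) ^ r ≤ (k.descFactorial r : ℝ) / (k : ℝ) ^ r := by
  have hs' : (0 : ℝ) < s := by exact_mod_cast hs
  have hk' : (0 : ℝ) < k := by exact_mod_cast hs.trans_le hsk
  have hpow (m : ℝ) : m ^ r = ∏ _i ∈ range r, m := by simp
  rw [Nat.descFactorial_eq_prod_range, Nat.descFactorial_eq_prod_range, hpow, hpow]
  push_cast
  rw [← prod_div_distrib, ← prod_div_distrib]
  refine prod_le_prod (fun i _ => by positivity) fun i _ => ?_
  rw [div_le_div_iff₀ hs' hk']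
  rcases le_total i s with his | hsi
  · have hik : i ≤ k := his.trans hsk
    push_cast [his, hik]
    nlinarith [(Nat.cast_le (α := ℝ)).2 hsk, (Nat.cast_nonneg (α := ℝ) i)]
  · rw [Nat.sub_eq_zero_of_le hsi, Nat.cast_zero, zero_mul]
    positivity

theorem maclaurin_insert_step {m j : ℕ} {x t e₀ e₁ : ℝ} (hx : 0 ≤ x) (ht : 0 ≤ t)
    (he₁ : e₁ ≤ m.choose (j + 1) * x ^ (j + 1)) (he₀ : e₀ ≤ m.choose j * x ^ j) :
    ((m : ℝ) + 1) ^ (j + 1) * (e₁ + t * e₀) ≤ (m + 1).choose (j + 1) * (m * x + t) ^ (j + 1) := by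
  have hpascal : ((m + 1).choose (j + 1) : ℝ) = m.choose j + m.choose (j + 1) := by
    exact_mod_cast Nat.choose_succ_succ m j
  have habsorb : ((m + 1) : ℝ) * m.choose j = (m + 1).choose (j + 1) * (j + 1) := by
    exact_mod_cast Nat.add_one_mul_choose_eq m j
  -- the tangent line of `z ↦ z ^ (j + 1)` at `(m + 1) * x`, evaluated at `m * x + t`
  calc ((m : ℝ) + 1) ^ (j + 1) * (e₁ + t * e₀)
      ≤ ((m : ℝ) + 1) ^ (j + 1) * (m.choose (j + 1) * x ^ (j + 1) + t * (m.choose j * x ^ j)) := by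
        gcongr
    _ = (m + 1).choose (j + 1) *
          ((m + 1) ^ j * x ^ j * ((m + 1) * x + (j + 1) * ((m * x + t) - (m + 1) * x))) := by
        linear_combination ((m : ℝ) + 1) ^ j * x ^ j * ((t - x) * habsorb - (m + 1) * x * hpascal)
    _ ≤ (m + 1).choose (j + 1) * (m * x + t) ^ (j + 1) := by
        rw [← mul_pow]
        gcongr
        exact pow_mul_add_succ_mul_sub_le_pow_succ (by positivity) (by positivity) j

section Maclaurin

variable {α : Type*} [DecidableEq α]

theorem Finset.sum_powersetCard_succ_insert_prod {R : Type*} [CommSemiring R]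
    {s : Finset α} {a : α} (ha : a ∉ s) (f : α → R) (j : ℕ) :
    ∑ A ∈ (insert a s).powersetCard (j + 1), ∏ i ∈ A, f i =
      ∑ A ∈ s.powersetCard (j + 1), ∏ i ∈ A, f i + f a * ∑ A ∈ s.powersetCard j, ∏ i ∈ A, f i := by
  have hnot : ∀ A ∈ s.powersetCard j, a ∉ A := fun A hA h => ha ((mem_powersetCard.1 hA).1 h)
  rw [powersetCard_succ_insert ha, sum_union, sum_image, mul_sum]
  · congr 1
    exact sum_congr rfl fun A hA => prod_insert (hnot A hA)
  · intro A hA B hB hAB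
    rw [← erase_insert (hnot A hA), ← erase_insert (hnot B hB)]
    exact congrArg (·.erase a) hAB
  · rw [disjoint_left]
    intro A hA hA'
    obtain ⟨B, -, rfl⟩ := mem_image.1 hA'
    exact ha ((mem_powersetCard.1 hA).1 (mem_insert_self a B))

/-- Maclaurin's inequality `e_r(f) / C(m, r) ≤ (e_1(f) / m) ^ r`, with the denominators cleared. -/
theorem Finset.card_pow_mul_sum_powersetCard_prod_le (s : Finset α)
    {f : α → ℝ} (hf : ∀ i ∈ s, 0 ≤ f i) (r : ℕ) :
    (#s : ℝ) ^ r * ∑ A ∈ s.powersetCard r, ∏ i ∈ A, f i ≤ (#s).choose r * (∑ i ∈ s, f i) ^ r := by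
  rcases s.eq_empty_or_nonempty with rfl | hs
  · cases r <;> simp
  induction hs using Finset.Nonempty.cons_induction generalizing r with
  | singleton a =>
    rcases r with _ | _ | r
    · simp
    · simp [powersetCard_one]
    · simp [powersetCard_eq_empty.2 (by simp : #{a} < r + 2), Nat.choose_eq_zero_of_lt]
  | cons a s ha hs ih =>
    have hfs : ∀ i ∈ s, 0 ≤ f i := fun i hi => hf i (mem_cons_of_mem hi)
    have ht : 0 ≤ f a := hf a (mem_cons_self a s)
    rcases r with _ | j
    · simp
    rw [cons_eq_insert, sum_powersetCard_succ_insert_prod ha, sum_insert ha,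
      card_insert_of_notMem ha]
    set m : ℕ := #s
    have hm : (0 : ℝ) < m := by simpa [m] using hs.card_pos
    obtain ⟨x, hx, hsum⟩ : ∃ x : ℝ, 0 ≤ x ∧ ∑ i ∈ s, f i = m * x :=
      ⟨(∑ i ∈ s, f i) / m, div_nonneg (sum_nonneg hfs) hm.le, by field_simp⟩
    have bound (i : ℕ) : ∑ A ∈ s.powersetCard i, ∏ w ∈ A, f w ≤ m.choose i * x ^ i := by
      have := ih hfs i
      rw [hsum, mul_pow] at this
      nlinarith [pow_pos hm i]
    push_cast
    rw [hsum, add_comm (f a)]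
    exact maclaurin_insert_step hx ht (bound (j + 1)) (bound j)

end Maclaurin

section LagrangianPoly

variable {α : Type*}

def lagrangianPoly (E : Finset (Finset α)) (y : α → ℝ) : ℝ := ∑ e ∈ E, ∏ v ∈ e, y v

theorem lagrangianPoly_le_abs (E : Finset (Finset α)) (y : α → ℝ) :
    lagrangianPoly E y ≤ lagrangianPoly E fun v => |y v| :=
  sum_le_sum fun e _ => (le_abs_self _).trans (abs_prod e y).le

variable [DecidableEq α]

theorem lagrangianPoly_le_sum_powersetCard_support [Fintype α] {E : Finset (Finset α)} {r : ℕ}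
    (hunif : ∀ e ∈ E, #e = r) {y : α → ℝ} (hy : ∀ w, 0 ≤ y w) :
    lagrangianPoly E y ≤ ∑ A ∈ ({w | y w ≠ 0} : Finset α).powersetCard r, ∏ w ∈ A, y w := by
  set S : Finset α := {w | y w ≠ 0}
  rw [lagrangianPoly, ← sum_filter_of_ne (p := (· ⊆ S)) fun e _ he w hw => by
    rw [mem_filter_univ]
    exact fun hw0 => he (prod_eq_zero hw hw0)]
  refine sum_le_sum_of_subset_of_nonneg (fun e he => ?_) fun A _ _ => prod_nonneg fun w _ => hy w
  obtain ⟨heE, heS⟩ := mem_filter.1 he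
  exact mem_powersetCard.2 ⟨heS, hunif e heE⟩

theorem factorial_mul_lagrangianPoly_le_of_card_support_le [Fintype α] {E : Finset (Finset α)}
    {r k : ℕ} (hunif : ∀ e ∈ E, #e = r) {y : α → ℝ} (hy : ∀ w, 0 ≤ y w) (h1 : ∑ w, y w = 1)
    (hk : #{w | y w ≠ 0} ≤ k) :
    (r.factorial : ℝ) * lagrangianPoly E y ≤ (k.descFactorial r : ℝ) / (k : ℝ) ^ r := by
  set S : Finset α := {w | y w ≠ 0}
  have hS1 : ∑ w ∈ S, y w = 1 := by
    rw [← h1]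
    exact sum_subset (subset_univ S) fun w _ hw => not_not.1 fun h => hw ((mem_filter_univ w).2 h)
  have hS : 0 < #S := card_pos.2 (nonempty_of_sum_ne_zero (by rw [hS1]; exact one_ne_zero))
  have maclaurin := card_pow_mul_sum_powersetCard_prod_le S (fun w _ => hy w) r
  rw [hS1, one_pow, mul_one, mul_comm, ← le_div_iff₀ (by positivity)] at maclaurin
  calc (r.factorial : ℝ) * lagrangianPoly E y
      ≤ r.factorial * (((#S).choose r : ℝ) / (#S : ℝ) ^ r) := by
        gcongr
        exact (lagrangianPoly_le_sum_powersetCard_support hunif hy).trans maclaurin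
    _ = ((#S).descFactorial r : ℝ) / (#S : ℝ) ^ r := by
        rw [Nat.descFactorial_eq_factorial_mul_choose]
        push_cast
        ring
    _ ≤ (k.descFactorial r : ℝ) / (k : ℝ) ^ r := descFactorial_div_pow_le_of_le hS hk r

def shiftWeight (y : α → ℝ) (u v : α) (t : ℝ) (w : α) : ℝ :=
  y w + (if w = u then t else 0) - (if w = v then t else 0)

theorem sum_shiftWeight [Fintype α] (y : α → ℝ) (u v : α) (t : ℝ) :
    ∑ w, shiftWeight y u v t w = ∑ w, y w := by
  simp [shiftWeight, sum_add_distrib, sum_sub_distrib]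

theorem shiftWeight_neg (y : α → ℝ) (u v : α) (t : ℝ) :
    shiftWeight y u v (-t) = shiftWeight y v u t := by
  funext w
  simp only [shiftWeight]
  split_ifs <;> ring

theorem shiftWeight_apply_nonneg {y : α → ℝ} (hy : ∀ w, 0 ≤ y w) {u v : α} (huv : u ≠ v)
    (w : α) : 0 ≤ shiftWeight y u v (y v) w := by
  simp only [shiftWeight]
  split_ifs with hwu hwv hwv
  · exact absurd (hwu.symm.trans hwv) huv
  · linarith [hy w, hy v]
  · rw [hwv]; linarith
  · linarith [hy w]

theorem card_support_shiftWeight_lt [Fintype α] {y : α → ℝ} {u v : α} (huv : u ≠ v)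
    (hu : y u ≠ 0) (hv : y v ≠ 0) :
    #{w | shiftWeight y u v (y v) w ≠ 0} < #{w | y w ≠ 0} := by
  refine card_lt_card ((ssubset_iff_of_subset fun w hw => ?_).2 ⟨v, by simpa using hv, ?_⟩)
  · rw [mem_filter_univ] at hw ⊢
    simp only [shiftWeight] at hw
    split_ifs at hw with hwu hwv hwv
    · exact hwu ▸ hu
    · exact hwu ▸ hu
    · exact absurd (by rw [hwv]; ring) hw
    · simpa using hw
  · rw [mem_filter_univ, not_not]
    simp [shiftWeight, huv.symm]

theorem prod_shiftWeight {e : Finset α} {u v : α} (huv : u ≠ v) (he : ¬(u ∈ e ∧ v ∈ e))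
    (y : α → ℝ) (t : ℝ) :
    ∏ w ∈ e, shiftWeight y u v t w =
      ∏ w ∈ e, y w + t * ((if u ∈ e then ∏ w ∈ e.erase u, y w else 0) -
        (if v ∈ e then ∏ w ∈ e.erase v, y w else 0)) := by
  have hoff : ∀ w, w ≠ u → w ≠ v → shiftWeight y u v t w = y w := by
    intro w hwu hwv
    simp [shiftWeight, hwu, hwv]
  by_cases hu : u ∈ e
  · have hv : v ∉ e := fun hv => he ⟨hu, hv⟩
    rw [← mul_prod_erase e _ hu, ← mul_prod_erase e y hu,
      prod_congr rfl fun w hw => hoff w (ne_of_mem_erase hw) fun h => hv (h ▸ mem_of_mem_erase hw)]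
    simp only [shiftWeight, ↓reduceIte, huv, sub_zero, hu, hv]
    ring
  by_cases hv : v ∈ e
  · rw [← mul_prod_erase e _ hv, ← mul_prod_erase e y hv,
      prod_congr rfl fun w hw => hoff w (fun h => hu (h ▸ mem_of_mem_erase hw)) (ne_of_mem_erase hw)]
    simp only [shiftWeight, huv.symm, ↓reduceIte, add_zero, hu, hv, zero_sub, mul_neg]
    ring
  · rw [prod_congr rfl fun w hw => hoff w (fun h => hu (h ▸ hw)) fun h => hv (h ▸ hw)]
    simp [hu, hv]

theorem exists_lagrangianPoly_shiftWeight_eq {E : Finset (Finset α)} {u v : α} (huv : u ≠ v)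
    (hcov : ∀ e ∈ E, ¬(u ∈ e ∧ v ∈ e)) (y : α → ℝ) :
    ∃ c, ∀ t, lagrangianPoly E (shiftWeight y u v t) = lagrangianPoly E y + t * c :=
  ⟨_, fun t => by
    rw [lagrangianPoly, lagrangianPoly, mul_sum, ← sum_add_distrib]
    exact sum_congr rfl fun e he => prod_shiftWeight huv (hcov e he) y t⟩

theorem exists_card_support_lt_lagrangianPoly_le [Fintype α] {E : Finset (Finset α)} {u v : α}
    (huv : u ≠ v) (hcov : ∀ e ∈ E, ¬(u ∈ e ∧ v ∈ e)) {y : α → ℝ} (hy : ∀ w, 0 ≤ y w)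
    (hu : y u ≠ 0) (hv : y v ≠ 0) :
    ∃ y' : α → ℝ, (∀ w, 0 ≤ y' w) ∧ ∑ w, y' w = ∑ w, y w ∧
      #{w | y' w ≠ 0} < #{w | y w ≠ 0} ∧ lagrangianPoly E y ≤ lagrangianPoly E y' := by
  obtain ⟨c, hc⟩ := exists_lagrangianPoly_shiftWeight_eq huv hcov y
  rcases le_total 0 c with hc0 | hc0
  · refine ⟨_, shiftWeight_apply_nonneg hy huv, sum_shiftWeight y u v _,
      card_support_shiftWeight_lt huv hu hv, ?_⟩
    rw [hc]
    nlinarith [hy v]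
  · refine ⟨_, shiftWeight_apply_nonneg hy huv.symm, sum_shiftWeight y v u _,
      card_support_shiftWeight_lt huv.symm hv hu, ?_⟩
    rw [← shiftWeight_neg, hc]
    nlinarith [hy u]

end LagrangianPoly

theorem exists_uncovered_pair_of_not_containsKFam {n k : ℕ} {E : Finset (Finset (Fin n))}
    (hfree : ¬ ContainsKFam (k + 1) E) {S : Finset (Fin n)} (hS : k < #S) :
    ∃ u ∈ S, ∃ v ∈ S, u ≠ v ∧ ∀ e ∈ E, ¬(u ∈ e ∧ v ∈ e) := by
  by_contra! hcov
  obtain ⟨C, hCS, hC⟩ := exists_subset_card_eq (show k + 1 ≤ #S from hS)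
  exact hfree ⟨C, hC, fun u hu v hv huv => hcov u (hCS hu) v (hCS hv) huv⟩

theorem factorial_mul_lagrangianPoly_le_of_not_containsKFam {n k r : ℕ}
    {E : Finset (Finset (Fin n))} (hunif : ∀ e ∈ E, #e = r) (hfree : ¬ ContainsKFam (k + 1) E)
    {y : Fin n → ℝ} (hy : ∀ w, 0 ≤ y w) (h1 : ∑ w, y w = 1) :
    (r.factorial : ℝ) * lagrangianPoly E y ≤ (k.descFactorial r : ℝ) / (k : ℝ) ^ r := by
  induction hs : #{w | y w ≠ 0} using Nat.strong_induction_on generalizing y with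
  | _ s ih =>
  rcases le_or_gt s k with hsk | hks
  · exact factorial_mul_lagrangianPoly_le_of_card_support_le hunif hy h1 (hs ▸ hsk)
  obtain ⟨u, hu, v, hv, huv, hcov⟩ := exists_uncovered_pair_of_not_containsKFam hfree (hs ▸ hks)
  obtain ⟨y', hy', hsum, hcard, hle⟩ := exists_card_support_lt_lagrangianPoly_le huv hcov hy
    ((mem_filter_univ u).1 hu) ((mem_filter_univ v).1 hv)
  calc (r.factorial : ℝ) * lagrangianPoly E y ≤ r.factorial * lagrangianPoly E y' := by gcongr
    _ ≤ _ := ih _ (hs ▸ hcard) hy' (hsum.trans h1) rfl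

theorem lagrangian_KFam_free_general (k r : ℕ)
    (n : ℕ) (E : Finset (Finset (Fin n))) (hunif : ∀ e ∈ E, e.card = r)
    (hfree : ¬ ContainsKFam (k + 1) E) :
    specRad r n E 1 ≤ (Nat.descFactorial k r : ℝ) / (k : ℝ) ^ r := by
  refine Real.sSup_le ?_ (by positivity)
  rintro _ ⟨x, hx, rfl⟩
  simp only [Real.rpow_one] at hx
  calc (r.factorial : ℝ) * ∑ e ∈ E, ∏ v ∈ e, x v
      ≤ r.factorial * lagrangianPoly E fun v => |x v| := by
        gcongr
        exact lagrangianPoly_le_abs E x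
    _ ≤ _ := factorial_mul_lagrangianPoly_le_of_not_containsKFam hunif hfree
        (fun v => abs_nonneg (x v)) hx

/-- Corollary 3.6: for `k ≥ r ≥ 2`, every `𝒦_{k+1}^{(r)}`-free `r`-graph `H`
satisfies `λ^(1)(H) ≤ (k)_r / k^r`; hence `π_λ(𝒦_{k+1}^{(r)}) ≤ (k)_r / k^r`. -/
theorem lagrangian_KFam_free (k r : ℕ) (hr : 2 ≤ r) (hrk : r ≤ k)
    (n : ℕ) (E : Finset (Finset (Fin n))) (hunif : ∀ e ∈ E, e.card = r)
    (hfree : ¬ ContainsKFam (k + 1) E) :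
    specRad r n E 1 ≤ (Nat.descFactorial k r : ℝ) / (k : ℝ) ^ r :=
  lagrangian_KFam_free_general k r n E hunif hfree
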